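/- For the negative feedback walk on the complete (balanced) $b$-ary tree of depth $H$ (each non-leaf node has exactly $b \geq 2$ children), started at the root, the cover time satisfies $T_C \leq 4H \frac{b+1}{b-1} b^H$ almost surely; in particular $\mathbb{E}[T_C] \leq 4H \frac{b+1}{b-1} b^H$. -/

import Mathlib

open Finset
open scoped Classical

/-- `transCount w t i j`: the number of transitions from node `i` to node `j` made by
the trajectory `w` before time `t`. -/
noncomputable def transCount {V : Type*} (w : ℕ → V) (t : ℕ) (i j : V) : ℕ :=
  ((Finset.range t).filter (fun s => w s = i ∧ w (s + 1) = j)).card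

/-- A trajectory `w` is admissible for the negative feedback ("favor least") walk on the
graph with adjacency relation `Adj`: each step goes to a neighbour of the current node
whose prior transition count from the current node is minimal. -/
def IsNegFeedbackWalk {V : Type*} (Adj : V → V → Prop) (w : ℕ → V) : Prop :=
  ∀ t : ℕ, Adj (w t) (w (t + 1)) ∧
    ∀ j : V, Adj (w t) j → transCount w t (w t) (w (t + 1)) ≤ transCount w t (w t) j

/-- Nodes of the complete balanced `b`-ary tree of depth `H`: lists over `Fin b` of
length at most `H` (the empty list is the root, and the parent of a nonempty list is
its tail). -/
def BTree (b H : ℕ) : Type := {l : List (Fin b) // l.length ≤ H}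

/-- Adjacency in the balanced `b`-ary tree: one node is the parent (tail) of the other. -/
def btreeAdj {b H : ℕ} (x y : BTree b H) : Prop :=
  (y.1.tail = x.1 ∧ y.1 ≠ []) ∨ (x.1.tail = y.1 ∧ x.1 ≠ [])

/-- The root of the balanced `b`-ary tree. -/
def btreeRoot (b H : ℕ) : BTree b H := ⟨[], by simp⟩

/-!
Two facts drive the proof. The negative feedback rule keeps the counts of the transitions out of a
node within one of each other, and on a tree the crossings of an edge alternate, so its two directed
counts differ by one exactly when the walk is currently on the far side. Suppose `v`, of depth `d`,
is still unvisited and the walk takes a transition it has already taken at least `d` times. Then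
every transition out of the current node and, moving up, out of each of its ancestors has been taken
at least `d` times. Going down from the lowest common ancestor towards `v` the counts drop by at most
one per level, so the edge into `v` has been used, which is absurd. Hence before `v` is visited no
directed edge is used more than `H` times, and `v` is reached within `H` times the number of
directed edges, that is `2 H` times the number of nodes.
-/

section transCount

variable {V : Type*}

theorem transCount_succ (w : ℕ → V) (t : ℕ) (i j : V) :
    transCount w (t + 1) i j =
      transCount w t i j + if w t = i ∧ w (t + 1) = j then 1 else 0 := by
  unfold transCount
  rw [range_add_one, filter_insert]
  split
  · rw [card_insert_of_notMem (by simp)]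
  · simp

theorem transCount_mono (w : ℕ → V) (i j : V) : Monotone fun t => transCount w t i j :=
  fun _ _ h => card_le_card (filter_subset_filter _ (range_subset_range.2 h))

theorem transCount_step_lt (w : ℕ → V) {s t : ℕ} (hst : s < t) :
    transCount w s (w s) (w (s + 1)) < transCount w t (w s) (w (s + 1)) := by
  have hsucc := transCount_succ w s (w s) (w (s + 1))
  rw [if_pos ⟨rfl, rfl⟩] at hsucc
  have hmono : transCount w (s + 1) (w s) (w (s + 1)) ≤ transCount w t (w s) (w (s + 1)) :=
    transCount_mono w _ _ hst
  omega

theorem transCount_eq_zero_of_forall_ne (w : ℕ → V) {t : ℕ} {v : V} (hv : ∀ r ≤ t, w r ≠ v)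
    (i : V) : transCount w t i v = 0 := by
  rw [transCount, card_eq_zero, filter_eq_empty_iff]
  rintro s hs ⟨-, hsv⟩
  exact hv (s + 1) (mem_range.1 hs) hsv

/-- The crossings `a → c` into `S` and `c → a` out of `S` alternate, starting with `a → c`. -/
theorem transCount_cut (w : ℕ → V) (S : V → Prop) {a c : V}
    (hin : ∀ s, (w s = a ∧ w (s + 1) = c) ↔ (¬ S (w s) ∧ S (w (s + 1))))
    (hout : ∀ s, (w s = c ∧ w (s + 1) = a) ↔ (S (w s) ∧ ¬ S (w (s + 1))))
    (h0 : ¬ S (w 0)) (t : ℕ) :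
    transCount w t a c = transCount w t c a + if S (w t) then 1 else 0 := by
  induction t with
  | zero => simp [transCount, h0]
  | succ t ih =>
    rw [transCount_succ, transCount_succ, ih, if_congr (hin t) rfl rfl,
      if_congr (hout t) rfl rfl]
    by_cases h : S (w t) <;> by_cases h' : S (w (t + 1)) <;> simp [h, h']

theorem le_mul_card_of_transCount_lt (w : ℕ → V) (E : Finset (V × V)) {N K : ℕ}
    (hE : ∀ s < N, (w s, w (s + 1)) ∈ E)
    (hK : ∀ s < N, transCount w s (w s) (w (s + 1)) < K) :
    N ≤ K * E.card := by
  let f : ℕ → (V × V) × ℕ := fun s => ((w s, w (s + 1)), transCount w s (w s) (w (s + 1)))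
  have hmaps : ∀ s ∈ range N, f s ∈ E ×ˢ range K := fun s hs =>
    mem_product.2 ⟨hE s (mem_range.1 hs), mem_range.2 (hK s (mem_range.1 hs))⟩
  have hinj : Set.InjOn f (range N) := by
    intro s _ s' _ hss'
    simp only [f, Prod.mk.injEq] at hss'
    obtain ⟨⟨hx, hy⟩, hcount⟩ := hss'
    by_contra hne
    rcases Nat.lt_or_gt_of_ne hne with h | h
    all_goals
      have := transCount_step_lt w h
      simp only [hx, hy] at this hcount
      omega
  simpa [card_product, mul_comm] using card_le_card_of_injOn f hmaps hinj

theorem IsNegFeedbackWalk.transCount_le_add_one {Adj : V → V → Prop} {w : ℕ → V}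
    (hw : IsNegFeedbackWalk Adj w) (t : ℕ) {x y y' : V} (hy : Adj x y) (hy' : Adj x y') :
    transCount w t x y ≤ transCount w t x y' + 1 := by
  induction t with
  | zero => simp [transCount]
  | succ t ih =>
    rw [transCount_succ, transCount_succ]
    by_cases hstep : w t = x ∧ w (t + 1) = y
    · obtain ⟨rfl, hwy⟩ := hstep
      have hmin := (hw t).2 y' hy'
      rw [hwy] at hmin
      split_ifs <;> omega
    · rw [if_neg hstep]
      split_ifs <;> omega

end transCount

namespace BTree

variable {b H : ℕ}

def parent (c : BTree b H) : BTree b H :=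
  ⟨c.1.tail, (List.tail_sublist _).length_le.trans c.2⟩

def ancestor (v : BTree b H) (i : ℕ) : BTree b H :=
  ⟨v.1.drop i, (List.drop_sublist _ _).length_le.trans v.2⟩

theorem ancestor_zero (v : BTree b H) : v.ancestor 0 = v := Subtype.ext List.drop_zero

theorem parent_ancestor (v : BTree b H) (i : ℕ) : (v.ancestor i).parent = v.ancestor (i + 1) :=
  Subtype.ext List.tail_drop

theorem ancestor_ne_nil (v : BTree b H) {i : ℕ} (hi : i < v.1.length) :
    (v.ancestor i).1 ≠ [] := by
  simpa [ancestor] using hi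

theorem adj_parent_left {c : BTree b H} (hc : c.1 ≠ []) : btreeAdj c.parent c :=
  Or.inl ⟨rfl, hc⟩

theorem adj_parent_right {c : BTree b H} (hc : c.1 ≠ []) : btreeAdj c c.parent :=
  Or.inr ⟨rfl, hc⟩

theorem adj_ancestor_succ (v : BTree b H) {i : ℕ} (hi : i < v.1.length) :
    btreeAdj (v.ancestor (i + 1)) (v.ancestor i) :=
  parent_ancestor v i ▸ adj_parent_left (ancestor_ne_nil v hi)

theorem adj_comm {x y : BTree b H} : btreeAdj x y ↔ btreeAdj y x := Or.comm

theorem step_into_subtree_iff {u u' c : BTree b H} (h : btreeAdj u u') (hc : c.1 ≠ []) :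
    (u = c.parent ∧ u' = c) ↔ (¬ c.1 <:+ u.1 ∧ c.1 <:+ u'.1) := by
  constructor
  · rintro ⟨rfl, rfl⟩
    refine ⟨fun hsuf => ?_, List.suffix_refl _⟩
    have := hsuf.length_le
    simp only [parent, List.length_tail] at this
    have := List.length_pos_iff.2 hc
    omega
  · rintro ⟨hu, hu'⟩
    rcases h with ⟨ht, hne⟩ | ⟨ht, -⟩
    · obtain ⟨d, l, hl⟩ := List.exists_cons_of_ne_nil hne
      rw [hl, List.tail_cons] at ht
      subst ht
      rw [hl, List.suffix_cons_iff] at hu'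
      rcases hu' with hcu' | hcu
      · refine ⟨Subtype.ext ?_, Subtype.ext (hl.trans hcu'.symm)⟩
        simp [parent, hcu']
      · exact absurd hcu hu
    · exact absurd (hu'.trans (ht ▸ List.tail_suffix u.1)) hu

def toSigma (x : BTree b H) : Σ k : Fin (H + 1), List.Vector (Fin b) k :=
  ⟨⟨x.1.length, Nat.lt_succ_of_le x.2⟩, ⟨x.1, rfl⟩⟩

theorem toSigma_injective : Function.Injective (toSigma (b := b) (H := H)) :=
  Function.Injective.of_comp
    (f := fun s : Σ k : Fin (H + 1), List.Vector (Fin b) k => s.2.toList) Subtype.val_injective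

noncomputable instance : Fintype (BTree b H) :=
  Fintype.ofInjective toSigma toSigma_injective

theorem card_le_geom_sum : Fintype.card (BTree b H) ≤ ∑ k ∈ range (H + 1), b ^ k := by
  calc Fintype.card (BTree b H) ≤ Fintype.card (Σ k : Fin (H + 1), List.Vector (Fin b) k) :=
        Fintype.card_le_of_injective _ toSigma_injective
    _ = ∑ k ∈ range (H + 1), b ^ k := by
        simp [Fintype.card_sigma, card_vector, Fin.sum_univ_eq_sum_range (b ^ ·)]

theorem card_adj_le :
    (univ.filter fun p : BTree b H × BTree b H => btreeAdj p.1 p.2).card ≤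
      2 * Fintype.card (BTree b H) := by
  calc (univ.filter fun p : BTree b H × BTree b H => btreeAdj p.1 p.2).card
      ≤ (univ.image fun c : BTree b H => (c.parent, c)).card +
          (univ.image fun c : BTree b H => (c, c.parent)).card := by
        refine (card_le_card fun p hp => ?_).trans (card_union_le _ _)
        obtain ⟨x, y⟩ := p
        rcases (mem_filter.1 hp).2 with ⟨hyx, -⟩ | ⟨hxy, -⟩
        · exact mem_union_left _ (mem_image.2 ⟨y, mem_univ _, Prod.ext (Subtype.ext hyx) rfl⟩)
        · exact mem_union_right _ (mem_image.2 ⟨x, mem_univ _, Prod.ext rfl (Subtype.ext hxy)⟩)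
    _ ≤ 2 * Fintype.card (BTree b H) := by
        have h₁ := card_image_le (s := univ) (f := fun c : BTree b H => (c.parent, c))
        have h₂ := card_image_le (s := univ) (f := fun c : BTree b H => (c, c.parent))
        rw [card_univ] at h₁ h₂
        omega

section walk

variable {w : ℕ → BTree b H}

theorem transCount_parent_eq_add_ite (hstep : ∀ t, btreeAdj (w t) (w (t + 1)))
    (h0 : w 0 = btreeRoot b H) {c : BTree b H} (hc : c.1 ≠ []) (t : ℕ) :
    transCount w t c.parent c =
      transCount w t c c.parent + if c.1 <:+ (w t).1 then 1 else 0 := by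
  convert transCount_cut w (fun x => c.1 <:+ x.1) (fun s => step_into_subtree_iff (hstep s) hc)
    (fun s => by rw [and_comm, step_into_subtree_iff (adj_comm.1 (hstep s)) hc, and_comm]) ?_ t
  rw [h0]
  exact fun hsuf => hc (List.suffix_nil.1 hsuf)

theorem le_transCount_ancestor (hw : IsNegFeedbackWalk btreeAdj w) (h0 : w 0 = btreeRoot b H)
    {t Q : ℕ} (hQ : ∀ y, btreeAdj (w t) y → Q ≤ transCount w t (w t) y) :
    ∀ j ≤ (w t).1.length, ∀ y, btreeAdj ((w t).ancestor j) y →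
      Q ≤ transCount w t ((w t).ancestor j) y := by
  intro j
  induction j with
  | zero =>
    intro _ y hy
    rw [ancestor_zero] at hy ⊢
    exact hQ y hy
  | succ j ih =>
    intro hj y hy
    have hc : ((w t).ancestor j).1 ≠ [] := ancestor_ne_nil _ hj
    have hup := ih (by omega) _ (adj_parent_right hc)
    have hcut := transCount_parent_eq_add_ite (fun s => (hw s).1) h0 hc t
    rw [if_pos (show ((w t).ancestor j).1 <:+ (w t).1 from List.drop_suffix j _)] at hcut
    rw [← parent_ancestor] at hy ⊢
    have := hw.transCount_le_add_one t (adj_parent_left hc) hy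
    omega

theorem transCount_ancestor_le (hw : IsNegFeedbackWalk btreeAdj w) (h0 : w 0 = btreeRoot b H)
    {v : BTree b H} {t : ℕ} (hv : ∀ r ≤ t, w r ≠ v) :
    ∀ i < v.1.length, ¬ v.1.drop i <:+ (w t).1 →
      transCount w t (v.ancestor (i + 1)) (v.ancestor i) ≤ i := by
  intro i
  induction i with
  | zero =>
    intro _ _
    rw [ancestor_zero, transCount_eq_zero_of_forall_ne w hv]
  | succ i ih =>
    intro hi hsuf
    have hc : (v.ancestor (i + 1)).1 ≠ [] := ancestor_ne_nil _ hi
    have hcut := transCount_parent_eq_add_ite (fun s => (hw s).1) h0 hc t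
    rw [if_neg (show ¬ (v.ancestor (i + 1)).1 <:+ (w t).1 from hsuf), parent_ancestor] at hcut
    have hbal := hw.transCount_le_add_one t (adj_parent_right hc)
      (adj_ancestor_succ v (by omega))
    rw [parent_ancestor] at hbal
    have hprev := ih (by omega) fun h =>
      hsuf ((List.tail_drop ▸ List.tail_suffix (v.1.drop i)).trans h)
    omega

theorem transCount_step_lt_length (hw : IsNegFeedbackWalk btreeAdj w)
    (h0 : w 0 = btreeRoot b H) {v : BTree b H} {t : ℕ} (hv : ∀ r ≤ t, w r ≠ v) :
    transCount w t (w t) (w (t + 1)) < v.1.length := by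
  by_contra! hstep
  have hv0 : v.1 ≠ [] := fun h => hv 0 t.zero_le (h0.trans (Subtype.ext h.symm))
  obtain ⟨k, hk, hkmin⟩ : ∃ k, v.1.drop k <:+ (w t).1 ∧ ∀ i < k, ¬ v.1.drop i <:+ (w t).1 :=
    have hex : ∃ k, v.1.drop k <:+ (w t).1 := ⟨v.1.length, by simp⟩
    ⟨Nat.find hex, Nat.find_spec hex, fun _ => Nat.find_min hex⟩
  have hk_le : k ≤ v.1.length := not_lt.1 fun h => hkmin _ h (by simp)
  cases k with
  | zero =>
    have hcut := transCount_parent_eq_add_ite (fun s => (hw s).1) h0 hv0 t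
    rw [if_pos (by simpa using hk), transCount_eq_zero_of_forall_ne w hv] at hcut
    omega
  | succ i =>
    obtain ⟨u, hu⟩ := hk
    have hlca : (w t).ancestor u.length = v.ancestor (i + 1) :=
      Subtype.ext (by simp [ancestor, ← hu])
    have hup := le_transCount_ancestor hw h0 (fun y hy => hstep.trans ((hw t).2 y hy))
      u.length (by simp [← hu]) _ (hlca ▸ adj_ancestor_succ v (by omega))
    have hdown := transCount_ancestor_le hw h0 hv i (by omega) (hkmin i i.lt_succ_self)
    rw [hlca] at hup
    omega

theorem exists_hit_le (hw : IsNegFeedbackWalk btreeAdj w) (h0 : w 0 = btreeRoot b H)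
    (v : BTree b H) : ∃ t ≤ 2 * H * Fintype.card (BTree b H), w t = v := by
  by_contra! hmiss
  have := le_mul_card_of_transCount_lt w
    (univ.filter fun p : BTree b H × BTree b H => btreeAdj p.1 p.2)
    (N := 2 * H * Fintype.card (BTree b H) + 1) (fun s _ => by simpa using (hw s).1)
    fun s hs => (transCount_step_lt_length hw h0 fun r hr => hmiss r (by omega)).trans_le v.2
  have := Nat.mul_le_mul_left H (card_adj_le (b := b) (H := H))
  linarith

end walk

end BTree

theorem geom_sum_range_succ_le {x : ℝ} (hx : 1 < x) (n : ℕ) :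
    ∑ k ∈ range (n + 1), x ^ k ≤ (x + 1) / (x - 1) * x ^ n := by
  rw [geom_sum_eq hx.ne', div_mul_eq_mul_div]
  refine div_le_div_of_nonneg_right ?_ (by linarith)
  rw [pow_succ]
  nlinarith [pow_pos (zero_lt_one.trans hx) n]

/-- every negative feedback walk on the complete balanced `b`-ary tree of
depth `H` (each non-leaf node has exactly `b ≥ 2` children) started at the root covers
every node within `4 H (b+1)/(b-1) bᴴ` steps; in particular
`T_C ≤ 4 H (b+1)/(b-1) bᴴ` almost surely, and so is `E[T_C]`. -/
theorem btree_negFeedback_cover (b H : ℕ) (hb : 2 ≤ b)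
    (w : ℕ → BTree b H) (hw : IsNegFeedbackWalk btreeAdj w) (h0 : w 0 = btreeRoot b H) :
    ∀ v : BTree b H, ∃ t : ℕ, w t = v ∧
      (t : ℝ) ≤ 4 * H * ((b + 1) / (b - 1) : ℝ) * (b : ℝ) ^ H := by
  intro v
  obtain ⟨t, ht, hwt⟩ := BTree.exists_hit_le hw h0 v
  refine ⟨t, hwt, ?_⟩
  have hb' : (1 : ℝ) < b := by exact_mod_cast hb
  have hcard : (Fintype.card (BTree b H) : ℝ) ≤ (b + 1) / (b - 1) * b ^ H :=
    calc (Fintype.card (BTree b H) : ℝ) ≤ ∑ k ∈ range (H + 1), (b : ℝ) ^ k := by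
          exact_mod_cast BTree.card_le_geom_sum
      _ ≤ (b + 1) / (b - 1) * b ^ H := geom_sum_range_succ_le hb' H
  have hbound : 0 ≤ ((b : ℝ) + 1) / (b - 1) * b ^ H :=
    mul_nonneg (div_nonneg (by linarith) (by linarith)) (by positivity)
  calc (t : ℝ) ≤ 2 * H * Fintype.card (BTree b H) := by exact_mod_cast ht
    _ ≤ 2 * H * ((b + 1) / (b - 1) * b ^ H) := by gcongr
    _ ≤ 4 * H * ((b + 1) / (b - 1)) * b ^ H := by nlinarith [(H.cast_nonneg : (0 : ℝ) ≤ H)]
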